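/- arXiv:1001.3593 — 2 statements merged into one kernel-verified Lean document; each statement's English description precedes it below -/
import Mathlib

section
/- Let x be a point in the plane, let P be a nonempty compact set, let x* be a point of P closest to x, and let Q be a set whose intersection with the open disk of center x and radius dist(x, x*) is nonempty. Then for every point y on the ray from x* through x beyond x (i.e., y = x* + t(x - x*) with t ≥ 1), the open disk centered at y of radius dist(y, x*) also intersects Q. -/
open Metric

/-- Fiber monotonicity: if the open disk centered at `x` through its nearest
point `x*` of `P` meets `Q`, then so does the open disk centered at any point
`y = x* + t (x - x*)`, `t ≥ 1`, with radius `dist y x*`. -/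
theorem stmt_2 (x : EuclideanSpace ℝ (Fin 2))
    (P : Set (EuclideanSpace ℝ (Fin 2))) (hP : P.Nonempty) (hPc : IsCompact P)
    (xs : EuclideanSpace ℝ (Fin 2)) (hxs : xs ∈ P)
    (hclosest : ∀ p ∈ P, dist x xs ≤ dist x p)
    (Q : Set (EuclideanSpace ℝ (Fin 2)))
    (hQ : (Q ∩ ball x (dist x xs)).Nonempty)
    (t : ℝ) (ht : 1 ≤ t) :
    (Q ∩ ball (xs + t • (x - xs)) (dist (xs + t • (x - xs)) xs)).Nonempty := by
  obtain ⟨q, hqQ, hqb⟩ := hQ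
  set y := xs + t • (x - xs) with hy
  have h1 : dist y xs = t * dist x xs := by
    simp only [hy, dist_eq_norm, add_sub_cancel_left, norm_smul, Real.norm_eq_abs,
      abs_of_nonneg (by linarith : (0:ℝ) ≤ t)]
  have h2 : dist y x = (t - 1) * dist x xs := by
    have : y - x = (t - 1) • (x - xs) := by
      simp only [hy]; module
    rw [dist_eq_norm, this, norm_smul, Real.norm_eq_abs,
      abs_of_nonneg (by linarith : (0:ℝ) ≤ t - 1), dist_eq_norm]
  refine ⟨q, hqQ, ?_⟩
  rw [mem_ball] at hqb ⊢
  calc dist q y ≤ dist q x + dist x y := dist_triangle q x y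
    _ = dist q x + (t - 1) * dist x xs := by rw [dist_comm x y, h2]
    _ < dist x xs + (t - 1) * dist x xs := by linarith
    _ = dist y xs := by rw [h1]; ring
end

section
/- Let P and Q be disjoint nonempty compact connected subsets of the plane. Then there are at most two directions φ ∈ [0, 2π) such that the supporting closed half-plane in direction φ of the convex hull of P ∪ Q touches both P and Q (i.e., the boundary line of the half-plane containing P ∪ Q on one side intersects both P and Q). -/
/-!
Transport the sets to `ℂ`. A good direction `φ` comes with contact points `p ∈ P` and `q ∈ Q`
on the supporting line, and `q - p` is a nonzero real multiple of `I * exp (φ * I)`, whose sign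
orients the pair. Of three good directions two have the same orientation, say `(P, Q)` at
`φ₁ < φ₂ < φ₁ + 2π`, and this is impossible. Join `p₁` to `p₂` by a path `γ` near `P` and `q₁`
to `q₂` by a path `σ` near `Q`. The map `(s, t) ↦ γ s - σ t` on the unit square never vanishes,
so it has a continuous argument `θ` (a lift through the covering map `exp`). On each edge of the
square the map avoids the outer normal ray at one contact point, so `θ` cannot cross the
corresponding angle modulo `2π` there. Following `θ` from `(0, 0)` to `(1, 1)` along the two
halves of the boundary gives `θ (1, 1) = φ₂ - π / 2 + 2π m` with `m < 0` one way and `m ≥ 0`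
the other.
-/

open Metric Real

/-- The unit direction vector of angle `φ` in the Euclidean plane. -/
noncomputable def dir (φ : ℝ) : EuclideanSpace ℝ (Fin 2) :=
  (WithLp.equiv 2 (Fin 2 → ℝ)).symm ![Real.cos φ, Real.sin φ]

section

open Complex ComplexConjugate

instance : ContractibleSpace unitInterval :=
  (convex_Icc (0 : ℝ) 1).contractibleSpace ⟨0, unitInterval.zero_mem⟩

instance : LocallyPathConnectedSpace unitInterval :=
  (convex_Icc (0 : ℝ) 1).locallyPathConnectedSpace

theorem exists_continuous_arg {A : Type*} [TopologicalSpace A] [SimplyConnectedSpace A]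
    [LocallyPathConnectedSpace A] {F : A → ℂ} (hF : Continuous F) (hF0 : ∀ a, F a ≠ 0)
    (a₀ : A) {t : ℝ} (ht : F a₀ = ‖F a₀‖ * exp (t * I)) :
    ∃ θ : A → ℝ, Continuous θ ∧ θ a₀ = t ∧ ∀ a, F a = ‖F a‖ * exp (θ a * I) := by
  have he₀ : exp (Real.log ‖F a₀‖ + t * I) = F a₀ := by
    rw [Complex.exp_add, ← ofReal_exp, Real.exp_log (norm_pos_iff.2 (hF0 a₀)), ← ht]
  obtain ⟨L, ⟨hL₀, hL⟩, -⟩ := isCoveringMapOn_exp.existsUnique_continuousMap_lifts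
    ⟨F, hF⟩ he₀ hF0
  refine ⟨fun a => (L a).im, continuous_im.comp L.continuous, by simp [hL₀], fun a => ?_⟩
  have hLa : exp (L a) = F a := congrFun hL a
  rw [← hLa, norm_exp, ofReal_exp, ← Complex.exp_add, re_add_im]

theorem inner_exp_mul_I (c r θ : ℝ) :
    inner ℝ (exp (c * I)) (r * exp (θ * I)) = r * Real.cos (θ - c) := by
  rw [Complex.inner, ← exp_conj, map_mul, conj_ofReal, conj_I, mul_assoc, ← Complex.exp_add,
    show (θ : ℂ) * I + c * -I = ((θ - c : ℝ) : ℂ) * I by push_cast; ring, re_ofReal_mul,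
    exp_ofReal_mul_I_re]

theorem abs_sub_lt_pi_of_neg_one_lt_cos {X : Type*} [TopologicalSpace X] [PreconnectedSpace X]
    {θ : X → ℝ} (hθ : Continuous θ) {c : ℝ} (hcos : ∀ x, -1 < Real.cos (θ x - c)) {x y : X}
    (hx : |θ x - c| < π) : |θ y - c| < π := by
  have hθ_ne : ∀ z, θ z ≠ c + π ∧ θ z ≠ c - π := fun z =>
    ⟨fun h => by simpa [h] using hcos z, fun h => by simpa [h] using hcos z⟩
  rw [abs_lt] at hx ⊢
  constructor
  · by_contra! h
    obtain ⟨z, hz⟩ := intermediate_value_univ y x hθ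
      (show c - π ∈ Set.Icc (θ y) (θ x) from ⟨by linarith, by linarith⟩)
    exact (hθ_ne z).2 hz
  · by_contra! h
    obtain ⟨z, hz⟩ := intermediate_value_univ x y hθ
      (show c + π ∈ Set.Icc (θ x) (θ y) from ⟨by linarith, by linarith⟩)
    exact (hθ_ne z).1 hz

theorem abs_le_pi_div_two_of_cos_nonneg {x : ℝ} (hx : |x| < π) (hcos : 0 ≤ Real.cos x) :
    |x| ≤ π / 2 := by
  by_contra! h
  have := Real.cos_neg_of_pi_div_two_lt_of_lt h (by linarith [pi_pos])
  rw [Real.cos_abs] at this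
  linarith

theorem inner_exp_sub_pi_mul_I (c : ℝ) (z : ℂ) :
    inner ℝ (exp (((c - π : ℝ) : ℂ) * I)) z = -inner ℝ (exp (c * I)) z := by
  rw [ofReal_sub, sub_mul, Complex.exp_sub_pi_mul_I, inner_neg_left]

theorem exp_add_int_mul_two_pi_mul_I (c : ℝ) (m : ℤ) :
    exp (((c + m * (2 * π) : ℝ) : ℂ) * I) = exp (c * I) := by
  rw [show ((c + m * (2 * π) : ℝ) : ℂ) * I = c * I + m * (2 * π * I) by push_cast; ring,
    Complex.exp_add, exp_int_mul_two_pi_mul_I, mul_one]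

theorem exists_int_eq_add_int_mul_two_pi {z : ℂ} {a b : ℝ} (hz : z ≠ 0)
    (ha : z = ‖z‖ * exp (a * I)) (hb : z = ‖z‖ * exp (b * I)) :
    ∃ m : ℤ, b = a + m * (2 * π) := by
  have hexp : exp (b * I) = exp (a * I) :=
    mul_left_cancel₀ (ofReal_ne_zero.2 (norm_ne_zero_iff.2 hz)) (hb.symm.trans ha)
  obtain ⟨m, hm⟩ := exp_eq_exp_iff_exists_int.1 hexp
  refine ⟨m, ofReal_injective ?_⟩
  apply mul_right_cancel₀ I_ne_zero
  push_cast
  linear_combination hm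

theorem abs_sub_le_pi_div_two_of_inner {X : Type*} [TopologicalSpace X] [PreconnectedSpace X]
    {F : X → ℂ} {θ : X → ℝ} (hθ : Continuous θ) (hF : ∀ x, F x = ‖F x‖ * exp (θ x * I))
    {c : ℝ} (hc : ∀ x, -‖F x‖ < inner ℝ (exp (c * I)) (F x)) {x y : X}
    (hx : |θ x - c| < π) (hy : 0 ≤ inner ℝ (exp (c * I)) (F y)) : |θ y - c| ≤ π / 2 := by
  have hinner : ∀ z, inner ℝ (exp (c * I)) (F z) = ‖F z‖ * Real.cos (θ z - c) := fun z => by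
    conv_lhs => rw [hF z]
    exact inner_exp_mul_I c _ _
  have hpos : ∀ z, 0 < ‖F z‖ := fun z => by
    have := hc z
    rw [hinner] at this
    rcases (norm_nonneg (F z)).eq_or_lt with h | h
    · rw [← h] at this; simp at this
    · exact h
  have hcos : ∀ z, -1 < Real.cos (θ z - c) := fun z => by
    have := hc z
    rw [hinner] at this
    exact lt_of_mul_lt_mul_left (by linarith) (hpos z).le
  refine abs_le_pi_div_two_of_cos_nonneg (abs_sub_lt_pi_of_neg_one_lt_cos hθ hcos hx) ?_
  rw [hinner] at hy
  exact nonneg_of_mul_nonneg_right (by linarith) (hpos y)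

theorem sub_eq_im_mul_I_mul_exp {φ : ℝ} {z : ℂ} (hz : inner ℝ (exp (φ * I)) z = 0) :
    z = (z * conj (exp (φ * I))).im * (I * exp (φ * I)) := by
  set w := z * conj (exp (φ * I))
  have hw : w = w.im * I := by
    conv_lhs => rw [← re_add_im w]
    rw [show w.re = 0 from by rw [← hz, Complex.inner]]
    simp
  have hconj : conj (exp (φ * I)) * exp (φ * I) = 1 := by
    rw [conj_mul', norm_exp_ofReal_mul_I]; simp
  calc z = w * exp (φ * I) := by rw [mul_assoc, hconj, mul_one]
    _ = _ := by rw [← mul_assoc, ← hw]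

theorem disjoint_thickening_of_two_mul_le_dist {α : Type*} [PseudoMetricSpace α] {A B : Set α}
    {ε : ℝ} (hsep : ∀ x ∈ A, ∀ y ∈ B, 2 * ε ≤ dist x y) :
    Disjoint (thickening ε A) (thickening ε B) := by
  refine Set.disjoint_left.2 fun z hzA hzB => ?_
  obtain ⟨x, hx, hzx⟩ := mem_thickening_iff.1 hzA
  obtain ⟨y, hy, hzy⟩ := mem_thickening_iff.1 hzB
  have := dist_triangle_left x y z
  linarith [hsep x hx y hy]

theorem inner_sub_lt_norm_sub_of_mem_thickening {E : Type*} [NormedAddCommGroup E]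
    [InnerProductSpace ℝ E] {A : Set E} {u b y : E} {ε : ℝ} (hu : ‖u‖ = 1)
    (hA : ∀ x ∈ A, inner ℝ u x ≤ inner ℝ u b) (hb : ∀ x ∈ A, 2 * ε ≤ dist x b)
    (hy : y ∈ thickening ε A) : inner ℝ u (y - b) < ‖y - b‖ := by
  obtain ⟨x, hx, hyx⟩ := mem_thickening_iff.1 hy
  have hux : inner ℝ u (y - x) ≤ ‖y - x‖ := by
    simpa [hu] using real_inner_le_norm u (y - x)
  have hsplit : inner ℝ u (y - b) = inner ℝ u (y - x) + (inner ℝ u x - inner ℝ u b) := by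
    simp only [inner_sub_right]; ring
  have htri := dist_triangle x y b
  rw [dist_eq_norm] at hyx htri
  rw [dist_eq_norm, dist_eq_norm, norm_sub_rev x y] at htri
  have hbx := hb x hx
  rw [dist_eq_norm] at hbx
  linarith [hA x hx]

theorem IsConnected.isPathConnected_thickening {E : Type*} [NormedAddCommGroup E]
    [NormedSpace ℝ E] {S : Set E} (hS : IsConnected S) {ε : ℝ} (hε : 0 < ε) :
    IsPathConnected (thickening ε S) := by
  have hunion : thickening ε S = ⋃ x : S, (ball (x : E) ε ∪ S) := by
    refine Set.Subset.antisymm (fun y hy => ?_) (Set.iUnion_subset fun x =>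
      Set.union_subset (ball_subset_thickening x.2 ε) (self_subset_thickening hε S))
    obtain ⟨x, hx, hyx⟩ := mem_thickening_iff.1 hy
    exact Set.mem_iUnion.2 ⟨⟨x, hx⟩, Or.inl hyx⟩
  rw [← isOpen_thickening.isConnected_iff_isPathConnected, hunion]
  have : Nonempty S := hS.nonempty.to_subtype
  refine ⟨?_, isPreconnected_iUnion ?_ fun x => ?_⟩
  · obtain ⟨x, hx⟩ := hS.nonempty
    exact ⟨x, Set.mem_iUnion.2 ⟨⟨x, hx⟩, Or.inr hx⟩⟩
  · obtain ⟨x, hx⟩ := hS.nonempty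
    exact ⟨x, Set.mem_iInter.2 fun _ => Or.inr hx⟩
  · exact (convex_ball (x : E) ε).isPreconnected.union (x : E) (mem_ball_self hε) x.2
      hS.isPreconnected

theorem exists_pos_forall_two_mul_le_dist {α : Type*} [PseudoMetricSpace α] {A B : Set α}
    (hA : IsCompact A) (hB : IsClosed B) (hAB : Disjoint A B) :
    ∃ ε > 0, ∀ x ∈ A, ∀ y ∈ B, 2 * ε ≤ dist x y := by
  obtain ⟨r, hr, hsep⟩ := exists_pos_forall_lt_edist hA hB hAB
  refine ⟨r / 2, by positivity, fun x hx y hy => ?_⟩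
  have h := hsep x hx y hy
  rw [edist_dist, ← ENNReal.ofReal_coe_nnreal,
    ENNReal.ofReal_lt_ofReal_iff_of_nonneg r.coe_nonneg] at h
  linarith

-- `inner ℝ u z < ‖z‖` for a unit vector `u` says that `z` avoids the ray spanned by `u`.
theorem false_of_square {F : unitInterval × unitInterval → ℂ} (hF : Continuous F)
    (hF0 : ∀ x, F x ≠ 0) {φ₁ φ₂ : ℝ} (hlt : φ₁ < φ₂) (hlt' : φ₂ < φ₁ + 2 * π)
    (h00 : F (0, 0) = ‖F (0, 0)‖ * exp ((φ₁ - π / 2 : ℝ) * I))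
    (h11 : F (1, 1) = ‖F (1, 1)‖ * exp ((φ₂ - π / 2 : ℝ) * I))
    (hbot : ∀ s, inner ℝ (exp (φ₁ * I)) (F (s, 0)) < ‖F (s, 0)‖)
    (htop : ∀ s, inner ℝ (exp (φ₂ * I)) (F (s, 1)) < ‖F (s, 1)‖)
    (hleft : ∀ t, -‖F (0, t)‖ < inner ℝ (exp (φ₁ * I)) (F (0, t)))
    (hright : ∀ t, -‖F (1, t)‖ < inner ℝ (exp (φ₂ * I)) (F (1, t)))
    (h10 : inner ℝ (exp (φ₁ * I)) (F (1, 0)) ≤ 0) (h10' : 0 ≤ inner ℝ (exp (φ₂ * I)) (F (1, 0)))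
    (h01 : 0 ≤ inner ℝ (exp (φ₁ * I)) (F (0, 1))) (h01' : inner ℝ (exp (φ₂ * I)) (F (0, 1)) ≤ 0) :
    False := by
  obtain ⟨θ, hθ, hθ₀, hθF⟩ := exists_continuous_arg hF hF0 (0, 0) h00
  obtain ⟨m, hm⟩ := exists_int_eq_add_int_mul_two_pi (hF0 (1, 1)) h11 (hθF (1, 1))
  have hπ := pi_pos
  have hbot' : |θ (1, 0) - (φ₁ - π)| ≤ π / 2 :=
    abs_sub_le_pi_div_two_of_inner (F := fun s => F (s, 0)) (θ := fun s => θ (s, 0))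
      (by fun_prop) (fun s => hθF (s, 0)) (x := 0)
      (fun s => by rw [inner_exp_sub_pi_mul_I]; linarith [hbot s])
      (by rw [hθ₀, abs_lt]; constructor <;> linarith)
      (by rw [inner_exp_sub_pi_mul_I]; linarith)
  have hright' : |θ (1, 0) - (φ₂ + m * (2 * π))| ≤ π / 2 :=
    abs_sub_le_pi_div_two_of_inner (F := fun t => F (1, t)) (θ := fun t => θ (1, t))
      (by fun_prop) (fun t => hθF (1, t)) (x := 1)
      (fun t => by rw [exp_add_int_mul_two_pi_mul_I]; exact hright t)
      (by rw [hm, abs_lt]; constructor <;> linarith)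
      (by rwa [exp_add_int_mul_two_pi_mul_I])
  have hleft' : |θ (0, 1) - φ₁| ≤ π / 2 :=
    abs_sub_le_pi_div_two_of_inner (F := fun t => F (0, t)) (θ := fun t => θ (0, t))
      (by fun_prop) (fun t => hθF (0, t)) (x := 0) hleft
      (by rw [hθ₀, abs_lt]; constructor <;> linarith) h01
  have htop' : |θ (0, 1) - (φ₂ - π + m * (2 * π))| ≤ π / 2 :=
    abs_sub_le_pi_div_two_of_inner (F := fun s => F (s, 1)) (θ := fun s => θ (s, 1))
      (by fun_prop) (fun s => hθF (s, 1)) (x := 1)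
      (fun s => by
        rw [exp_add_int_mul_two_pi_mul_I, inner_exp_sub_pi_mul_I]; linarith [htop s])
      (by rw [hm, abs_lt]; constructor <;> linarith)
      (by rw [exp_add_int_mul_two_pi_mul_I, inner_exp_sub_pi_mul_I]; linarith)
  -- via `(1, 0)`: `2π m ≤ φ₁ - φ₂ < 0`; via `(0, 1)`: `2π m ≥ φ₁ - φ₂ > -2π`
  rw [abs_le] at hbot' hright' hleft' htop'
  have hm_neg : (m : ℝ) < 0 := by nlinarith
  have hm_gt : (-1 : ℝ) < m := by nlinarith
  have : m < 0 := by exact_mod_cast hm_neg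
  have : -1 < m := by exact_mod_cast hm_gt
  omega

-- `0 < s` orients the pair: `q` follows `p` counterclockwise along the supporting line.
structure IsSupportPair (P Q : Set ℂ) (φ : ℝ) (p q : ℂ) : Prop where
  mem_left : p ∈ P
  mem_right : q ∈ Q
  inner_le : ∀ x ∈ P ∪ Q, inner ℝ (exp (φ * I)) x ≤ inner ℝ (exp (φ * I)) p
  exists_sub_eq : ∃ s : ℝ, 0 < s ∧ q - p = s * (I * exp (φ * I))

namespace IsSupportPair

variable {P Q : Set ℂ} {φ : ℝ} {p q : ℂ}

theorem sub_eq_norm_mul_exp (h : IsSupportPair P Q φ p q) :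
    p - q = ‖p - q‖ * exp ((φ - π / 2 : ℝ) * I) := by
  obtain ⟨s, hs, hqp⟩ := h.exists_sub_eq
  have hexp : exp ((φ - π / 2 : ℝ) * I) = -(I * exp (φ * I)) := by
    rw [show ((φ - π / 2 : ℝ) : ℂ) * I = φ * I - π / 2 * I by push_cast; ring,
      Complex.exp_sub, exp_pi_div_two_mul_I, div_I]
    ring
  have hpq : p - q = s * exp ((φ - π / 2 : ℝ) * I) := by
    rw [hexp, ← neg_sub, hqp]; ring
  rw [hpq, norm_mul, norm_exp_ofReal_mul_I, mul_one, norm_real, Real.norm_of_nonneg hs.le]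

theorem inner_right_eq (h : IsSupportPair P Q φ p q) :
    inner ℝ (exp (φ * I)) q = inner ℝ (exp (φ * I)) p := by
  have := inner_exp_mul_I φ ‖p - q‖ (φ - π / 2)
  rw [show φ - π / 2 - φ = -(π / 2) by ring, Real.cos_neg, Real.cos_pi_div_two, mul_zero,
    ← h.sub_eq_norm_mul_exp, inner_sub_right] at this
  linarith

theorem inner_le_right (h : IsSupportPair P Q φ p q) :
    ∀ x ∈ P ∪ Q, inner ℝ (exp (φ * I)) x ≤ inner ℝ (exp (φ * I)) q :=
  h.inner_right_eq ▸ h.inner_le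

end IsSupportPair

theorem isSupportPair_or_isSupportPair {P Q : Set ℂ} {φ : ℝ} {p q : ℂ} (hp : p ∈ P) (hq : q ∈ Q)
    (hpq : p ≠ q) (hle : ∀ x ∈ P ∪ Q, inner ℝ (exp (φ * I)) x ≤ inner ℝ (exp (φ * I)) p)
    (heq : inner ℝ (exp (φ * I)) q = inner ℝ (exp (φ * I)) p) :
    IsSupportPair P Q φ p q ∨ IsSupportPair Q P φ q p := by
  have hqp := sub_eq_im_mul_I_mul_exp (z := q - p) (φ := φ) (by rw [inner_sub_right, heq, sub_self])
  set s := ((q - p) * conj (exp (φ * I))).im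
  rcases lt_trichotomy s 0 with hs | hs | hs
  · refine Or.inr ⟨hq, hp, fun x hx => heq ▸ hle x (Set.union_comm Q P ▸ hx), -s, by linarith, ?_⟩
    rw [← neg_sub, hqp]; push_cast; ring
  · rw [hs, ofReal_zero, zero_mul, sub_eq_zero] at hqp
    exact absurd hqp.symm hpq
  · exact Or.inl ⟨hp, hq, hle, s, hs, hqp⟩

theorem IsSupportPair.false_of_paths {P Q : Set ℂ} {φ₁ φ₂ : ℝ} {p₁ q₁ p₂ q₂ : ℂ}
    (h₁ : IsSupportPair P Q φ₁ p₁ q₁) (h₂ : IsSupportPair P Q φ₂ p₂ q₂) (hlt : φ₁ < φ₂)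
    (hlt' : φ₂ < φ₁ + 2 * π) {ε : ℝ} (hsep : ∀ x ∈ P, ∀ y ∈ Q, 2 * ε ≤ dist x y)
    (γ : Path p₁ p₂) (σ : Path q₁ q₂) (hγ : ∀ s, γ s ∈ thickening ε P)
    (hσ : ∀ t, σ t ∈ thickening ε Q) : False := by
  have hu : ∀ φ : ℝ, ‖exp (φ * I)‖ = 1 := norm_exp_ofReal_mul_I
  have hγ_edge : ∀ {φ p q}, IsSupportPair P Q φ p q → ∀ s,
      inner ℝ (exp (φ * I)) (γ s - q) < ‖γ s - q‖ := fun h s =>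
    inner_sub_lt_norm_sub_of_mem_thickening (hu _)
      (fun x hx => h.inner_le_right x (Or.inl hx)) (fun x hx => hsep x hx _ h.mem_right) (hγ s)
  have hσ_edge : ∀ {φ p q}, IsSupportPair P Q φ p q → ∀ t,
      -‖p - σ t‖ < inner ℝ (exp (φ * I)) (p - σ t) := fun h t => by
    have := inner_sub_lt_norm_sub_of_mem_thickening (hu _)
      (fun x hx => h.inner_le x (Or.inr hx))
      (fun x hx => dist_comm x _ ▸ hsep _ h.mem_left x hx) (hσ t)
    rw [← neg_sub, inner_neg_right, norm_neg]
    linarith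
  refine false_of_square (F := fun x => γ x.1 - σ x.2) (by fun_prop)
    (fun x => sub_ne_zero.2 ((disjoint_thickening_of_two_mul_le_dist hsep).ne_of_mem (hγ _) (hσ _)))
    hlt hlt' (by simpa using h₁.sub_eq_norm_mul_exp) (by simpa using h₂.sub_eq_norm_mul_exp)
    (by simpa using hγ_edge h₁) (by simpa using hγ_edge h₂) (by simpa using hσ_edge h₁)
    (by simpa using hσ_edge h₂)
    ?_ ?_ ?_ ?_ <;> simp only [Path.source, Path.target, inner_sub_right, sub_nonneg, sub_nonpos]
  · exact h₁.inner_le_right p₂ (Or.inl h₂.mem_left)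
  · exact h₂.inner_le q₁ (Or.inr h₁.mem_right)
  · exact h₁.inner_le q₂ (Or.inr h₂.mem_right)
  · exact h₂.inner_le_right p₁ (Or.inl h₁.mem_left)

theorem IsSupportPair.false_of_lt {P Q : Set ℂ} (hPc : IsCompact P) (hQc : IsCompact Q)
    (hPconn : IsConnected P) (hQconn : IsConnected Q) (hdisj : Disjoint P Q)
    {φ₁ φ₂ : ℝ} {p₁ q₁ p₂ q₂ : ℂ} (h₁ : IsSupportPair P Q φ₁ p₁ q₁) (h₂ : IsSupportPair P Q φ₂ p₂ q₂)
    (hlt : φ₁ < φ₂) (hlt' : φ₂ < φ₁ + 2 * π) : False := by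
  obtain ⟨ε, hε, hsep⟩ := exists_pos_forall_two_mul_le_dist hPc hQc.isClosed hdisj
  have hγ := (hPconn.isPathConnected_thickening hε).joinedIn _
    (self_subset_thickening hε _ h₁.mem_left) _ (self_subset_thickening hε _ h₂.mem_left)
  have hσ := (hQconn.isPathConnected_thickening hε).joinedIn _
    (self_subset_thickening hε _ h₁.mem_right) _ (self_subset_thickening hε _ h₂.mem_right)
  exact h₁.false_of_paths h₂ hlt hlt' hsep _ _ hγ.somePath_mem hσ.somePath_mem

def supportPairDirections (P Q : Set ℂ) : Set ℝ :=
  {φ ∈ Set.Ico 0 (2 * π) | ∃ p q, IsSupportPair P Q φ p q}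

theorem subsingleton_supportPairDirections {P Q : Set ℂ} (hPc : IsCompact P) (hQc : IsCompact Q)
    (hPconn : IsConnected P) (hQconn : IsConnected Q) (hdisj : Disjoint P Q) :
    (supportPairDirections P Q).Subsingleton := by
  intro φ₁ ⟨hφ₁, p₁, q₁, h₁⟩ φ₂ ⟨hφ₂, p₂, q₂, h₂⟩
  by_contra hne
  rcases lt_or_gt_of_ne hne with hlt | hlt
  · exact h₁.false_of_lt hPc hQc hPconn hQconn hdisj h₂ hlt (by linarith [hφ₁.1, hφ₂.2])
  · exact h₂.false_of_lt hPc hQc hPconn hQconn hdisj h₁ hlt (by linarith [hφ₂.1, hφ₁.2])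

theorem encard_supportPairDirections_union_le_two {P Q : Set ℂ} (hPc : IsCompact P)
    (hQc : IsCompact Q) (hPconn : IsConnected P) (hQconn : IsConnected Q) (hdisj : Disjoint P Q) :
    (supportPairDirections P Q ∪ supportPairDirections Q P).encard ≤ 2 :=
  calc _ ≤ _ := Set.encard_union_le _ _
    _ ≤ 1 + 1 := add_le_add
      (Set.encard_le_one_iff_subsingleton.2
        (subsingleton_supportPairDirections hPc hQc hPconn hQconn hdisj))
      (Set.encard_le_one_iff_subsingleton.2
        (subsingleton_supportPairDirections hQc hPc hQconn hPconn hdisj.symm))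
    _ = 2 := by norm_num

theorem orthonormalBasisOneI_repr_symm_dir (φ : ℝ) :
    Complex.orthonormalBasisOneI.repr.symm (dir φ) = exp (φ * I) := by
  simp [dir, Complex.orthonormalBasisOneI_repr_symm_apply, exp_mul_I]

end

theorem stmt_5_general (P Q : Set (EuclideanSpace ℝ (Fin 2)))
    (hPc : IsCompact P) (hQc : IsCompact Q)
    (hPconn : IsConnected P) (hQconn : IsConnected Q)
    (hdisj : Disjoint P Q) :
    {φ : ℝ | φ ∈ Set.Ico 0 (2 * π) ∧
      (∃ p ∈ P, (inner ℝ (dir φ) p : ℝ) =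
        sSup ((fun x => (inner ℝ (dir φ) x : ℝ)) '' (P ∪ Q))) ∧
      (∃ q ∈ Q, (inner ℝ (dir φ) q : ℝ) =
        sSup ((fun x => (inner ℝ (dir φ) x : ℝ)) '' (P ∪ Q)))}.encard
      ≤ 2 := by
  set e := Complex.orthonormalBasisOneI.repr.symm
  have he : ∀ φ x, inner ℝ (dir φ) x = inner ℝ (Complex.exp (φ * Complex.I)) (e x) :=
    fun φ x => by rw [← orthonormalBasisOneI_repr_symm_dir, LinearIsometryEquiv.inner_map_map]
  refine (Set.encard_le_encard ?_).trans (encard_supportPairDirections_union_le_two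
    (hPc.image e.continuous) (hQc.image e.continuous) (hPconn.image e e.continuous.continuousOn)
    (hQconn.image e e.continuous.continuousOn) ((Set.disjoint_image_iff e.injective).2 hdisj))
  rintro φ ⟨hφ, ⟨p, hp, hpφ⟩, ⟨q, hq, hqφ⟩⟩
  have hle : ∀ x ∈ e '' P ∪ e '' Q, inner ℝ (Complex.exp (φ * Complex.I)) x ≤
      inner ℝ (Complex.exp (φ * Complex.I)) (e p) := by
    rw [← Set.image_union]
    rintro _ ⟨x, hx, rfl⟩
    rw [← he, ← he, hpφ]
    exact le_csSup ((hPc.union hQc).bddAbove_image (by fun_prop)) (Set.mem_image_of_mem _ hx)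
  rcases isSupportPair_or_isSupportPair (Set.mem_image_of_mem e hp) (Set.mem_image_of_mem e hq)
    (e.injective.ne (hdisj.ne_of_mem hp hq)) hle (by rw [← he, ← he, hpφ, hqφ]) with h | h
  exacts [Or.inl ⟨hφ, _, _, h⟩, Or.inr ⟨hφ, _, _, h⟩]

/-- For two disjoint nonempty compact connected sets `P, Q` in the plane,
there are at most two directions `φ ∈ [0, 2π)` such that the supporting line
of `P ∪ Q` in direction `φ` meets both `P` and `Q`. -/
theorem stmt_5 (P Q : Set (EuclideanSpace ℝ (Fin 2)))
    (hP : P.Nonempty) (hQ : Q.Nonempty)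
    (hPc : IsCompact P) (hQc : IsCompact Q)
    (hPconn : IsConnected P) (hQconn : IsConnected Q)
    (hdisj : Disjoint P Q) :
    {φ : ℝ | φ ∈ Set.Ico 0 (2 * π) ∧
      (∃ p ∈ P, (inner ℝ (dir φ) p : ℝ) =
        sSup ((fun x => (inner ℝ (dir φ) x : ℝ)) '' (P ∪ Q))) ∧
      (∃ q ∈ Q, (inner ℝ (dir φ) q : ℝ) =
        sSup ((fun x => (inner ℝ (dir φ) x : ℝ)) '' (P ∪ Q)))}.encard
      ≤ 2 :=
  stmt_5_general P Q hPc hQc hPconn hQconn hdisj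
end
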